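/- Let X be a compact a-space with denominator function ζ. Then the unital Abelian lattice-ordered group C(X) of a-maps X → (ℝ,den) is metrically complete: it is Archimedean, and it is Cauchy-complete in the metric induced by the uniform norm ‖f‖ = sup{|f(x)| : x ∈ X}. In particular, if a sequence of a-maps f_n : X → ℝ converges uniformly to a function f : X → ℝ, then f is an a-map, i.e., f is continuous and den(f(x)) divides ζ(x) for all x ∈ X. -/

import Mathlib

open Filter

open Classical in
/-- The denominator of a real number: the reduced denominator if rational, `0` if irrational. -/
noncomputable def den (r : ℝ) : ℕ :=
  if h : ∃ q : ℚ, (q : ℝ) = r then h.choose.den else 0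

/-- `C(X)`: the set of a-maps from the a-space `(X, ζ)` to `(ℝ, den)`. -/
def AMapSet {X : Type*} [TopologicalSpace X] (ζ : X → ℕ) : Set (X → ℝ) :=
  {f | Continuous f ∧ ∀ x, den (f x) ∣ ζ x}

/-! The proof rests on one observation: for `m ≠ 0`, `den r ∣ m` says exactly that `m * r` is an
integer, so `{r | den r ∣ m}` is closed in `ℝ` (for `m = 0` it is all of `ℝ`). Hence the divisibility
condition passes to pointwise limits, continuity passes to uniform limits, and `C(X)` is a closed
subset of the complete space of real functions with uniform convergence. -/

theorem Rat.den_dvd_iff_exists_mul_eq_intCast (q : ℚ) {m : ℕ} (hm : m ≠ 0) :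
    q.den ∣ m ↔ ∃ k : ℤ, q * m = k := by
  constructor
  · rintro ⟨c, rfl⟩
    exact ⟨q.num * c, by push_cast; rw [← mul_assoc, Rat.mul_den_eq_num]⟩
  · rintro ⟨k, hk⟩
    have hq : q = Rat.divInt k m := by
      rw [Rat.divInt_eq_div, ← hk, Int.cast_natCast, mul_div_cancel_right₀ _ (by exact_mod_cast hm)]
    exact_mod_cast hq ▸ Rat.den_dvd k m

theorem den_ratCast (q : ℚ) : den (q : ℝ) = q.den := by
  have h : ∃ q' : ℚ, (q' : ℝ) = q := ⟨q, rfl⟩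
  have hq : h.choose = q := by exact_mod_cast h.choose_spec
  rw [den, dif_pos h, hq]

theorem den_dvd_iff_exists_mul_eq_intCast (r : ℝ) {m : ℕ} (hm : m ≠ 0) :
    den r ∣ m ↔ ∃ k : ℤ, r * m = k := by
  by_cases hr : ∃ q : ℚ, (q : ℝ) = r
  · obtain ⟨q, rfl⟩ := hr
    rw [den_ratCast, Rat.den_dvd_iff_exists_mul_eq_intCast q hm]
    exact exists_congr fun k => by exact_mod_cast Iff.rfl
  · have hden : den r = 0 := by simp [den, dif_neg hr]
    simp only [hden, zero_dvd_iff, hm, false_iff, not_exists]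
    intro k hk
    exact hr ⟨k / m, by push_cast; rw [← hk, mul_div_cancel_right₀ _ (by exact_mod_cast hm)]⟩

theorem isClosed_setOf_den_dvd (m : ℕ) : IsClosed {r : ℝ | den r ∣ m} := by
  rcases eq_or_ne m 0 with rfl | hm
  · simp
  have hset : {r : ℝ | den r ∣ m} = (· * (m : ℝ)) ⁻¹' Set.range ((↑) : ℤ → ℝ) := by
    ext r
    simp [den_dvd_iff_exists_mul_eq_intCast r hm, eq_comm]
  rw [hset]
  exact Int.isClosedEmbedding_coe_real.isClosed_range.preimage (continuous_mul_const _)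

theorem TendstoUniformly.mem_aMapSet {X ι : Type*} [TopologicalSpace X] {ζ : X → ℕ}
    {p : Filter ι} [p.NeBot] {u : ι → X → ℝ} {f : X → ℝ} (hu : ∀ n, u n ∈ AMapSet ζ)
    (hf : TendstoUniformly u f p) : f ∈ AMapSet ζ :=
  ⟨hf.continuous (Eventually.of_forall fun n => (hu n).1).frequently, fun x =>
    (isClosed_setOf_den_dvd (ζ x)).mem_of_tendsto (hf.tendsto_at x)
      (Eventually.of_forall fun n => (hu n).2 x)⟩

theorem UniformCauchySeqOn.exists_tendstoUniformly {α β ι : Type*} [UniformSpace β]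
    [CompleteSpace β] {p : Filter ι} [p.NeBot] {F : ι → α → β}
    (hF : UniformCauchySeqOn F p Set.univ) : ∃ f, TendstoUniformly F f p := by
  choose f hf using fun x => CompleteSpace.complete (hF.cauchy_map (Set.mem_univ x))
  exact ⟨f, tendstoUniformlyOn_univ.mp (hF.tendstoUniformlyOn_of_tendsto fun x _ => hf x)⟩

theorem nonpos_of_forall_nat_mul_le {a b : ℝ} (h : ∀ n : ℕ, n * a ≤ b) : a ≤ 0 := by
  by_contra! ha
  obtain ⟨n, hn⟩ := exists_nat_gt (b / a)
  exact (h n).not_gt ((div_lt_iff₀ ha).mp hn)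

theorem amaps_metrically_complete_general
    {X : Type*} [TopologicalSpace X] (ζ : X → ℕ) :
    (∀ f ∈ AMapSet ζ, ∀ g ∈ AMapSet ζ,
      (∀ (n : ℕ) (x : X), (n : ℝ) * f x ≤ g x) → ∀ x : X, f x ≤ 0) ∧
    (∀ u : ℕ → X → ℝ, (∀ n, u n ∈ AMapSet ζ) →
      UniformCauchySeqOn u atTop Set.univ →
      ∃ f ∈ AMapSet ζ, TendstoUniformly u f atTop) ∧
    (∀ (u : ℕ → X → ℝ) (f : X → ℝ), (∀ n, u n ∈ AMapSet ζ) →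
      TendstoUniformly u f atTop → f ∈ AMapSet ζ) := by
  refine ⟨fun f _ g _ h x => nonpos_of_forall_nat_mul_le fun n => h n x, fun u hu hcauchy => ?_,
    fun u f hu hf => hf.mem_aMapSet hu⟩
  obtain ⟨f, hf⟩ := hcauchy.exists_tendstoUniformly
  exact ⟨f, hf.mem_aMapSet hu, hf⟩

/-- For a compact a-space `(X, ζ)`, the unital Abelian ℓ-group `C(X)`
of a-maps `X → (ℝ, den)` is metrically complete: it is Archimedean, every uniformly
Cauchy sequence of a-maps converges uniformly to an a-map, and a uniform limit of a-maps
is an a-map. -/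
theorem amaps_metrically_complete
    {X : Type*} [TopologicalSpace X] [CompactSpace X] (ζ : X → ℕ) :
    (∀ f ∈ AMapSet ζ, ∀ g ∈ AMapSet ζ,
      (∀ (n : ℕ) (x : X), (n : ℝ) * f x ≤ g x) → ∀ x : X, f x ≤ 0) ∧
    (∀ u : ℕ → X → ℝ, (∀ n, u n ∈ AMapSet ζ) →
      UniformCauchySeqOn u atTop Set.univ →
      ∃ f ∈ AMapSet ζ, TendstoUniformly u f atTop) ∧
    (∀ (u : ℕ → X → ℝ) (f : X → ℝ), (∀ n, u n ∈ AMapSet ζ) →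
      TendstoUniformly u f atTop → f ∈ AMapSet ζ) :=
  amaps_metrically_complete_general ζ
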